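/- Monotonicity: For every hybrid game α and all sets of states X, Y, A, B ⊆ S, if X ⊆ A and Y ⊆ B, then ς_α(X,Y) ⊆ ς_α(A,B) and δ_α(X,Y) ⊆ δ_α(A,B). -/
import Mathlib


open Set

/-- Hybrid games over a variable set `V`. Terms/ODE right-hand sides are
interpreted as functions from states `V → ℝ` to `ℝ`; tests and evolution
domain constraints are sets of states. -/
inductive Game (V : Type*) where
  | assign (x : V) (e : (V → ℝ) → ℝ)
  | ode (x : V) (f : (V → ℝ) → ℝ) (Q : Set (V → ℝ))
  | test (Q : Set (V → ℝ))
  | choice (a b : Game V)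
  | seq (a b : Game V)
  | dual (a : Game V)
  | star (a : Game V)

variable {V : Type*} [DecidableEq V]

/-- `φ : ℝ → (V → ℝ)` (restricted to `[0,r]`) is a solution of `x' = f(x) & Q`
of duration `r ≥ 0`: `t ↦ φ t x` is differentiable with derivative `f (φ s)`
at each `s ∈ [0,r]`, `φ s ∈ Q` on `[0,r]`, and all other variables stay
constant along `φ`. -/
def IsSolution (x : V) (f : (V → ℝ) → ℝ) (Q : Set (V → ℝ)) (r : ℝ)
    (φ : ℝ → (V → ℝ)) : Prop :=
  0 ≤ r ∧
  (∀ s ∈ Set.Icc 0 r, HasDerivAt (fun t => φ t x) (f (φ s)) s) ∧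
  (∀ s ∈ Set.Icc 0 r, φ s ∈ Q) ∧
  (∀ s ∈ Set.Icc 0 r, ∀ y, y ≠ x → φ s y = φ 0 y)

mutual
/-- Angel's semi-competitive winning region ς_α(X,Y). -/
def angel : Game V → Set (V → ℝ) → Set (V → ℝ) → Set (V → ℝ)
  | .assign x e, X, _ => {ω | Function.update ω x (e ω) ∈ X}
  | .ode x f Q, X, _ =>
      {ω | ∃ r φ, IsSolution x f Q r φ ∧ φ 0 = ω ∧ φ r ∈ X}
  | .test Q, X, _ => Q ∩ X
  | .choice a b, X, Y => angel a X Y ∪ angel b X Y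
  | .seq a b, X, Y => angel a (angel b X Y) (demon b X Y)
  | .dual a, X, Y => demon a Y X
  | .star a, X, Y =>
      ⋂₀ {Z | X ∪ angel a Z Zᶜ ⊆ Z} ∪
      ⋂₀ {Z | (X ∩ Y) ∪ (angel a Z Z ∩ demon a Z Z) ⊆ Z}

/-- Demon's semi-competitive winning region δ_α(X,Y). -/
def demon : Game V → Set (V → ℝ) → Set (V → ℝ) → Set (V → ℝ)
  | .assign x e, _, Y => {ω | Function.update ω x (e ω) ∈ Y}
  | .ode x f Q, X, Y =>
      {ω | ∀ r φ, IsSolution x f Q r φ → φ 0 = ω → ∀ s ∈ Set.Icc 0 r, φ s ∈ Y} ∪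
      {ω | ∃ r φ, IsSolution x f Q r φ ∧ φ 0 = ω ∧ ∃ s ∈ Set.Icc 0 r, φ s ∈ X ∩ Y}
  | .test Q, _, Y => Qᶜ ∪ Y
  | .choice a b, X, Y =>
      (demon a X Y ∩ demon b X Y) ∪ (demon a X Y ∩ angel a X Y) ∪
      (demon b X Y ∩ angel b X Y)
  | .seq a b, X, Y => demon a (angel b X Y) (demon b X Y)
  | .dual a, X, Y => angel a Y X
  | .star a, X, Y =>
      ⋃₀ {Z | Z ⊆ Y ∩ demon a Zᶜ Z} ∪
      ⋂₀ {Z | (X ∩ Y) ∪ (angel a Z Z ∩ demon a Z Z) ⊆ Z}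
end

/-- Angel's one-argument zero-sum dGL winning region ς_α(X). -/
def dglAngel : Game V → Set (V → ℝ) → Set (V → ℝ)
  | .assign x e, X => {ω | Function.update ω x (e ω) ∈ X}
  | .ode x f Q, X => {ω | ∃ r φ, IsSolution x f Q r φ ∧ φ 0 = ω ∧ φ r ∈ X}
  | .test Q, X => Q ∩ X
  | .choice a b, X => dglAngel a X ∪ dglAngel b X
  | .seq a b, X => dglAngel a (dglAngel b X)
  | .dual a, X => (dglAngel a Xᶜ)ᶜ
  | .star a, X => ⋂₀ {Z | X ∪ dglAngel a Z ⊆ Z}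

/-- Demon's one-argument zero-sum dGL winning region δ_α(X) = (ς_α(Xᶜ))ᶜ. -/
def dglDemon (g : Game V) (X : Set (V → ℝ)) : Set (V → ℝ) :=
  (dglAngel g Xᶜ)ᶜ

/-- Systematization α^{-d}: removes all dual operators. -/
def Game.sys : Game V → Game V
  | .assign x e => .assign x e
  | .ode x f Q => .ode x f Q
  | .test Q => .test Q
  | .choice a b => .choice a.sys b.sys
  | .seq a b => .seq a.sys b.sys
  | .dual a => a.sys
  | .star a => .star a.sys

/-- Monotonicity: if `X ⊆ A` and `Y ⊆ B` then
`ς_α(X,Y) ⊆ ς_α(A,B)` and `δ_α(X,Y) ⊆ δ_α(A,B)`. -/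
theorem monotonicity (α : Game V) (X Y A B : Set (V → ℝ))
    (hXA : X ⊆ A) (hYB : Y ⊆ B) :
    angel α X Y ⊆ angel α A B ∧ demon α X Y ⊆ demon α A B := by
  induction α generalizing X Y A B with
  | assign x e =>
    exact ⟨fun ω h => hXA h, fun ω h => hYB h⟩
  | ode x f Q =>
    constructor
    · rintro ω ⟨r, φ, hs, h0, hr⟩
      exact ⟨r, φ, hs, h0, hXA hr⟩
    · rintro ω (h | ⟨r, φ, hs, h0, s, hsmem, hX, hY⟩)
      · exact Or.inl fun r φ h1 h2 s hsm => hYB (h r φ h1 h2 s hsm)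
      · exact Or.inr ⟨r, φ, hs, h0, s, hsmem, hXA hX, hYB hY⟩
  | test Q =>
    exact ⟨inter_subset_inter_right _ hXA, union_subset_union_right _ hYB⟩
  | choice a b iha ihb =>
    obtain ⟨ha1, ha2⟩ := iha X Y A B hXA hYB
    obtain ⟨hb1, hb2⟩ := ihb X Y A B hXA hYB
    constructor
    · exact union_subset_union ha1 hb1
    · rintro ω ((⟨h1, h2⟩ | ⟨h1, h2⟩) | ⟨h1, h2⟩)
      · exact Or.inl (Or.inl ⟨ha2 h1, hb2 h2⟩)
      · exact Or.inl (Or.inr ⟨ha2 h1, ha1 h2⟩)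
      · exact Or.inr ⟨hb2 h1, hb1 h2⟩
  | seq a b iha ihb =>
    obtain ⟨hb1, hb2⟩ := ihb X Y A B hXA hYB
    exact iha _ _ _ _ hb1 hb2
  | dual a iha =>
    obtain ⟨h1, h2⟩ := iha Y X B A hYB hXA
    exact ⟨h2, h1⟩
  | star a iha =>
    constructor
    · apply union_subset_union
      · exact sInter_subset_sInter fun Z hZ =>
          union_subset (hXA.trans (subset_union_left.trans hZ))
            (subset_union_right.trans hZ)
      · exact sInter_subset_sInter fun Z hZ =>
          union_subset ((inter_subset_inter hXA hYB).trans
            (subset_union_left.trans hZ)) (subset_union_right.trans hZ)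
    · apply union_subset_union
      · exact sUnion_subset_sUnion fun Z hZ =>
          hZ.trans (inter_subset_inter_left _ hYB)
      · exact sInter_subset_sInter fun Z hZ =>
          union_subset ((inter_subset_inter hXA hYB).trans
            (subset_union_left.trans hZ)) (subset_union_right.trans hZ)
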